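/- arXiv:1610.09051 — 2 statements merged into one kernel-verified Lean document; each statement's English description precedes it below -/
import Mathlib

section
/- Let Γ = (V,E) be a connected graph, G a group acting linearly on a d-dimensional vector space F, ρ an edge potential, n = |V|. View an F-valued vertex potential s : V → F as a vector [s] in F^V ≅ K^{nd}. Then synchronization solutions s¹,…,s^k are linearly independent in the fibrewise sense (i.e., s¹_i,…,s^k_i linearly independent in F at each vertex i) if and only if [s¹],…,[s^k] are linearly independent as elements of F^V. -/
/-!
Synchronization solutions form a subspace, and because every edge map is invertible a solution
vanishing at one vertex vanishes along every walk from it. On a connected graph, evaluation at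
any vertex is therefore injective on the solution space, and an injective linear map both
preserves and reflects linear independence.
-/

namespace SimpleGraph

variable {V R M : Type*} [Semiring R] [AddCommMonoid M] [Module R M]

def syncSolutions (Γ : SimpleGraph V) (φ : V → V → M ≃ₗ[R] M) : Submodule R (V → M) where
  carrier := {s | ∀ i j, Γ.Adj i j → s i = φ i j (s j)}
  add_mem' hs ht i j hij := by simp [hs i j hij, ht i j hij]
  zero_mem' := by simp
  smul_mem' c s hs i j hij := by simp [hs i j hij]

variable {Γ : SimpleGraph V} {φ : V → V → M ≃ₗ[R] M} {s : V → M}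

theorem mem_syncSolutions : s ∈ Γ.syncSolutions φ ↔ ∀ i j, Γ.Adj i j → s i = φ i j (s j) :=
  Iff.rfl

theorem Reachable.apply_eq_zero_of_mem_syncSolutions {i j : V} (h : Γ.Reachable i j)
    (hs : s ∈ Γ.syncSolutions φ) (hi : s i = 0) : s j = 0 := by
  obtain ⟨w⟩ := h
  induction w with
  | nil => exact hi
  | @cons a b _ hab _ ih =>
    refine ih ((φ a b).map_eq_zero_iff.1 ?_)
    rw [← hs a b hab, hi]

theorem Preconnected.eq_zero_of_mem_syncSolutions (hΓ : Γ.Preconnected) {i : V}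
    (hs : s ∈ Γ.syncSolutions φ) (hi : s i = 0) : s = 0 :=
  funext fun j => (hΓ i j).apply_eq_zero_of_mem_syncSolutions hs hi

end SimpleGraph

namespace SimpleGraph.Preconnected

variable {V R M : Type*} [Ring R] [AddCommGroup M] [Module R M]
  {Γ : SimpleGraph V} {φ : V → V → M ≃ₗ[R] M}

theorem injOn_proj_syncSolutions (hΓ : Γ.Preconnected) (i : V) :
    Set.InjOn (LinearMap.proj i : (V → M) →ₗ[R] M) (Γ.syncSolutions φ) := by
  intro x hx y hy hxy
  have hsub : x - y ∈ Γ.syncSolutions φ := sub_mem hx hy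
  exact sub_eq_zero.1 (hΓ.eq_zero_of_mem_syncSolutions hsub (sub_eq_zero.2 hxy))

theorem linearIndependent_apply_iff (hΓ : Γ.Preconnected) (i : V) {ι : Type*} {s : ι → V → M}
    (hs : ∀ m, s m ∈ Γ.syncSolutions φ) :
    LinearIndependent R (fun m => s m i) ↔ LinearIndependent R s :=
  (LinearMap.proj i).linearIndependent_iff_of_injOn <|
    (hΓ.injOn_proj_syncSolutions i).mono (Submodule.span_le.2 (Set.range_subset_iff.2 hs))

end SimpleGraph.Preconnected

theorem sync_solutions_linearIndependent_iff_global_general {V G K F : Type*} [Group G]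
    [Field K] [AddCommGroup F] [Module K F] {Γ : SimpleGraph V}
    (hconn : Γ.Connected) (τ : G →* (F ≃ₗ[K] F)) (ρ : V → V → G)
    {k : ℕ} (s : Fin k → V → F)
    (hsol : ∀ (m : Fin k) (i j : V), Γ.Adj i j → s m i = τ (ρ i j) (s m j)) :
    (∀ i : V, LinearIndependent K (fun m : Fin k => s m i)) ↔
      LinearIndependent K s := by
  have hmem (m : Fin k) : s m ∈ Γ.syncSolutions fun i j => τ (ρ i j) :=
    SimpleGraph.mem_syncSolutions.2 (hsol m)
  obtain ⟨i₀⟩ := hconn.nonempty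
  exact ⟨fun h => (hconn.preconnected.linearIndependent_apply_iff i₀ hmem).1 (h i₀),
    fun h i => (hconn.preconnected.linearIndependent_apply_iff i hmem).2 h⟩

/-- synchronization solutions `s¹, …, sᵏ` are fibrewise linearly
independent (at every vertex) iff they are linearly independent as elements of
the product space `F^V` of functions `V → F`. -/
theorem sync_solutions_linearIndependent_iff_global {V G K F : Type*} [Group G]
    [Field K] [AddCommGroup F] [Module K F] {Γ : SimpleGraph V}
    (hconn : Γ.Connected) (τ : G →* (F ≃ₗ[K] F)) (ρ : V → V → G)
    (hsym : ∀ i j, Γ.Adj i j → ρ i j = (ρ j i)⁻¹)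
    {k : ℕ} (s : Fin k → V → F)
    (hsol : ∀ (m : Fin k) (i j : V), Γ.Adj i j → s m i = τ (ρ i j) (s m j)) :
    (∀ i : V, LinearIndependent K (fun m : Fin k => s m i)) ↔
      LinearIndependent K s :=
  sync_solutions_linearIndependent_iff_global_general hconn τ ρ s hsol
end

section
/- Let Γ be a finite connected weighted graph, G = O(d) acting on F = ℝ^d, and ρ an edge potential. Then ρ is synchronizable over G if and only if the kernel of the graph connection Laplacian L₁ has dimension exactly d. -/
/-!
Pairing `L₁ f` with `f` gives the Dirichlet energy `½ Σ_{i ~ j} w_{ij} ‖f_i − ρ_{ij} f_j‖²`,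
so `ker L₁` consists of the sections with `f_i = ρ_{ij} f_j` along every edge. On a connected
graph such a section has constant norm and is determined by its value at one vertex `v₀`, so
evaluation at `v₀` embeds `ker L₁` isometrically into `ℝ^d`. The kernel has dimension `d` iff
this embedding is onto, and then its inverse, read off at each vertex `i`, is an orthogonal
map `g_i` with `g_i = ρ_{ij} g_j`; conversely the columns of a synchronization fill `ker L₁`.
-/

open InnerProductSpace

/-- The graph connection Laplacian: `(L₁ f)_i = d_i f_i − Σ_{j ~ i} w_{ij} ρ_{ij} f_j`. -/
noncomputable def connectionLaplacian {V F : Type*} [Fintype V]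
    [NormedAddCommGroup F] [InnerProductSpace ℝ F]
    (Γ : SimpleGraph V) [DecidableRel Γ.Adj] (w : V → V → ℝ)
    (ρ : V → V → (F ≃ₗᵢ[ℝ] F)) (f : V → F) : V → F :=
  fun i => (∑ j ∈ Γ.neighborFinset i, w i j) • f i -
    ∑ j ∈ Γ.neighborFinset i, w i j • ρ i j (f j)

namespace SimpleGraph

variable {V : Type*} (Γ : SimpleGraph V)

theorem sum_sum_neighborFinset_comm [Fintype V] [DecidableRel Γ.Adj] {M : Type*}
    [AddCommMonoid M] (A : V → V → M) :
    ∑ i, ∑ j ∈ Γ.neighborFinset i, A i j = ∑ i, ∑ j ∈ Γ.neighborFinset i, A j i :=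
  Finset.sum_comm' fun i j => by simp [Γ.adj_comm]

variable {F : Type*} [NormedAddCommGroup F] [InnerProductSpace ℝ F]

def parallelSections (ρ : V → V → (F ≃ₗᵢ[ℝ] F)) : Submodule ℝ (V → F) where
  carrier := {f | ∀ i j, Γ.Adj i j → f i = ρ i j (f j)}
  add_mem' hf hg i j hij := by simp only [Pi.add_apply, hf i j hij, hg i j hij, map_add]
  zero_mem' _ _ _ := by simp
  smul_mem' c _ hf i j hij := by simp only [Pi.smul_apply, hf i j hij, map_smul]

variable {Γ} {ρ : V → V → (F ≃ₗᵢ[ℝ] F)}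

theorem Connected.norm_eq_of_mem_parallelSections (hconn : Γ.Connected) {f : V → F}
    (hf : f ∈ Γ.parallelSections ρ) (i j : V) : ‖f i‖ = ‖f j‖ := by
  obtain ⟨p⟩ := hconn i j
  induction p with
  | nil => rfl
  | cons h _ ih => rw [hf _ _ h, LinearIsometryEquiv.norm_map, ih]

variable (Γ ρ) in
def evalParallelSection (v₀ : V) : Γ.parallelSections ρ →ₗ[ℝ] F :=
  (LinearMap.proj v₀).comp (Γ.parallelSections ρ).subtype

theorem Connected.injective_evalParallelSection (hconn : Γ.Connected) (v₀ : V) :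
    Function.Injective (Γ.evalParallelSection ρ v₀) := by
  rw [injective_iff_map_eq_zero]
  intro f hf
  ext i : 2
  have hnorm := hconn.norm_eq_of_mem_parallelSections f.2 i v₀
  rwa [show f.1 v₀ = 0 from hf, norm_zero, norm_eq_zero] at hnorm

section Laplacian

variable [Fintype V] [DecidableRel Γ.Adj] {w : V → V → ℝ}

theorem two_mul_sum_inner_connectionLaplacian (hwsym : ∀ i j, w i j = w j i) (f : V → F) :
    2 * ∑ i, ⟪f i, connectionLaplacian Γ w ρ f i⟫_ℝ =
      ∑ i, ∑ j ∈ Γ.neighborFinset i, w i j * ‖f i - ρ i j (f j)‖ ^ 2 := by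
  have hsquare : ∀ i j, w i j * ‖f i - ρ i j (f j)‖ ^ 2 =
      w i j * ‖f i‖ ^ 2 + w i j * ‖f j‖ ^ 2 - 2 * (w i j * ⟪f i, ρ i j (f j)⟫_ℝ) := by
    intro i j
    rw [norm_sub_sq_real, LinearIsometryEquiv.norm_map]
    ring
  have hswap : ∑ i, ∑ j ∈ Γ.neighborFinset i, w i j * ‖f j‖ ^ 2 =
      ∑ i, ∑ j ∈ Γ.neighborFinset i, w i j * ‖f i‖ ^ 2 := by
    rw [Γ.sum_sum_neighborFinset_comm]
    simp only [hwsym]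
  simp only [connectionLaplacian, inner_sub_right, inner_sum, real_inner_smul_right,
    real_inner_self_eq_norm_sq, Finset.sum_mul, hsquare, Finset.sum_sub_distrib,
    Finset.sum_add_distrib, hswap, ← Finset.mul_sum]
  ring

theorem connectionLaplacian_eq_zero_iff (hwsym : ∀ i j, w i j = w j i)
    (hwpos : ∀ i j, Γ.Adj i j → 0 < w i j) (f : V → F) :
    connectionLaplacian Γ w ρ f = 0 ↔ f ∈ Γ.parallelSections ρ := by
  constructor
  · intro hL i j hij
    have hj : j ∈ Γ.neighborFinset i := (Γ.mem_neighborFinset i j).2 hij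
    have hnonneg : ∀ i, ∀ j ∈ Γ.neighborFinset i, 0 ≤ w i j * ‖f i - ρ i j (f j)‖ ^ 2 :=
      fun i j hj => mul_nonneg (hwpos i j ((Γ.mem_neighborFinset i j).1 hj)).le (sq_nonneg _)
    have henergy : ∑ i, ∑ j ∈ Γ.neighborFinset i, w i j * ‖f i - ρ i j (f j)‖ ^ 2 = 0 := by
      rw [← two_mul_sum_inner_connectionLaplacian hwsym, hL]
      simp
    have hterm : w i j * ‖f i - ρ i j (f j)‖ ^ 2 = 0 :=
      (Finset.sum_eq_zero_iff_of_nonneg (hnonneg i)).1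
        ((Finset.sum_eq_zero_iff_of_nonneg fun i _ => Finset.sum_nonneg (hnonneg i)).1
          henergy i (Finset.mem_univ i)) j hj
    rw [mul_eq_zero, or_iff_right (hwpos i j hij).ne', sq_eq_zero_iff, norm_eq_zero,
      sub_eq_zero] at hterm
    exact hterm
  · intro hf
    funext i
    have hparallel : ∀ j ∈ Γ.neighborFinset i, w i j • ρ i j (f j) = w i j • f i :=
      fun j hj => by rw [← hf i j ((Γ.mem_neighborFinset i j).1 hj)]
    simp only [connectionLaplacian, Pi.zero_apply, Finset.sum_congr rfl hparallel,
      ← Finset.sum_smul, sub_self]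

end Laplacian

theorem Connected.exists_synchronization_iff_surjective_evalParallelSection
    [FiniteDimensional ℝ F] (hconn : Γ.Connected) (v₀ : V) :
    (∃ g : V → (F ≃ₗᵢ[ℝ] F), ∀ i j, Γ.Adj i j → ∀ x, g i x = ρ i j (g j x)) ↔
      Function.Surjective (Γ.evalParallelSection ρ v₀) := by
  constructor
  · rintro ⟨g, hg⟩ x
    exact ⟨⟨fun i => g i ((g v₀).symm x), fun i j hij => hg i j hij _⟩,
      (g v₀).apply_symm_apply x⟩
  · intro hsurj
    let e := LinearEquiv.ofBijective _ ⟨hconn.injective_evalParallelSection v₀, hsurj⟩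
    have hnorm : ∀ i x, ‖(e.symm x).1 i‖ = ‖x‖ := fun i x => by
      rw [hconn.norm_eq_of_mem_parallelSections (e.symm x).2 i v₀]
      exact congrArg norm (e.apply_symm_apply x)
    let g : V → (F →ₗᵢ[ℝ] F) := fun i =>
      ⟨(LinearMap.proj i).comp ((Γ.parallelSections ρ).subtype.comp e.symm.toLinearMap),
        hnorm i⟩
    exact ⟨fun i => (g i).toLinearIsometryEquiv rfl, fun i j hij x => (e.symm x).2 i j hij⟩

theorem Connected.exists_synchronization_iff_finrank_parallelSections
    [Fintype V] [FiniteDimensional ℝ F] (hconn : Γ.Connected) :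
    (∃ g : V → (F ≃ₗᵢ[ℝ] F), ∀ i j, Γ.Adj i j → ∀ x, g i x = ρ i j (g j x)) ↔
      Module.finrank ℝ (Γ.parallelSections ρ) = Module.finrank ℝ F := by
  obtain ⟨v₀⟩ := hconn.nonempty
  have hinj := hconn.injective_evalParallelSection (ρ := ρ) v₀
  rw [hconn.exists_synchronization_iff_surjective_evalParallelSection v₀]
  refine ⟨fun hsurj => (LinearEquiv.ofBijective _ ⟨hinj, hsurj⟩).finrank_eq, fun hrank => ?_⟩
  exact (LinearMap.injective_iff_surjective_of_finrank_eq_finrank hrank).1 hinj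

end SimpleGraph

theorem synchronizable_iff_kernel_dim_eq_general {V : Type*} [Fintype V] {d : ℕ}
    (Γ : SimpleGraph V) [DecidableRel Γ.Adj] (hconn : Γ.Connected)
    (w : V → V → ℝ) (hwsym : ∀ i j, w i j = w j i)
    (hwpos : ∀ i j, Γ.Adj i j → 0 < w i j)
    (ρ : V → V → (EuclideanSpace ℝ (Fin d) ≃ₗᵢ[ℝ] EuclideanSpace ℝ (Fin d))) :
    (∃ g : V → (EuclideanSpace ℝ (Fin d) ≃ₗᵢ[ℝ] EuclideanSpace ℝ (Fin d)),
        ∀ i j, Γ.Adj i j → ∀ x, g i x = ρ i j (g j x)) ↔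
      Module.finrank ℝ
        (Submodule.span ℝ {f : V → EuclideanSpace ℝ (Fin d) |
          connectionLaplacian Γ w ρ f = 0}) = d := by
  have hker : {f : V → EuclideanSpace ℝ (Fin d) | connectionLaplacian Γ w ρ f = 0} =
      Γ.parallelSections ρ :=
    Set.ext fun f => SimpleGraph.connectionLaplacian_eq_zero_iff hwsym hwpos f
  rw [hker, Submodule.span_eq, hconn.exists_synchronization_iff_finrank_parallelSections,
    finrank_euclideanSpace_fin]

/-- for an `O(d)`-valued edge potential on a finite connected
weighted graph, the edge potential is synchronizable iff the kernel of the graph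
connection Laplacian has dimension exactly `d`. -/
theorem synchronizable_iff_kernel_dim_eq {V : Type*} [Fintype V] {d : ℕ}
    (Γ : SimpleGraph V) [DecidableRel Γ.Adj] (hconn : Γ.Connected)
    (w : V → V → ℝ) (hwsym : ∀ i j, w i j = w j i)
    (hwpos : ∀ i j, Γ.Adj i j → 0 < w i j)
    (ρ : V → V → (EuclideanSpace ℝ (Fin d) ≃ₗᵢ[ℝ] EuclideanSpace ℝ (Fin d)))
    (hρsym : ∀ i j, Γ.Adj i j → ρ j i = (ρ i j).symm) :
    (∃ g : V → (EuclideanSpace ℝ (Fin d) ≃ₗᵢ[ℝ] EuclideanSpace ℝ (Fin d)),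
        ∀ i j, Γ.Adj i j → ∀ x, g i x = ρ i j (g j x)) ↔
      Module.finrank ℝ
        (Submodule.span ℝ {f : V → EuclideanSpace ℝ (Fin d) |
          connectionLaplacian Γ w ρ f = 0}) = d :=
  synchronizable_iff_kernel_dim_eq_general Γ hconn w hwsym hwpos ρ
end
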